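/- arXiv:1304.3042 — 2 statements merged into one kernel-verified Lean document; each statement's English description precedes it below -/
import Mathlib

section
/- Assume I is a real interval centered at 0 with [−1,1] ⊆ I. A function f : Iⁿ → ℝ is a symmetric signed Choquet integral if and only if: (i) f is horizontally median-additive, and (ii) f(c·x·1_S) = c·f(x·1_S) for all c, x ∈ I such that c·x ∈ I and all S ⊆ X. -/
/-- `S↑_σ(i)` (0-indexed): the set `{σ(i), σ(i+1), …, σ(n-1)}`.  For `i = n` it is empty. -/
def SUp {n : ℕ} (σ : Equiv.Perm (Fin n)) (i : ℕ) : Finset (Fin n) :=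
  (Finset.univ.filter (fun j : Fin n => i ≤ (j : ℕ))).image σ

/-- `S↓_σ(i)`: the set `{σ(0), …, σ(i-1)}`.  For `i = 0` it is empty. -/
def SDown {n : ℕ} (σ : Equiv.Perm (Fin n)) (i : ℕ) : Finset (Fin n) :=
  (Finset.univ.filter (fun j : Fin n => (j : ℕ) < i)).image σ

/-- Two tuples are comonotonic if some permutation sorts both nondecreasingly. -/
def Comonotone {n : ℕ} (x y : Fin n → ℝ) : Prop :=
  ∃ σ : Equiv.Perm (Fin n), Monotone (x ∘ σ) ∧ Monotone (y ∘ σ)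

/-- The tuple `r·1_S`. -/
def indTuple {n : ℕ} (S : Finset (Fin n)) (r : ℝ) : Fin n → ℝ :=
  fun j => if j ∈ S then r else 0

/-- The signed Choquet integral of `x` w.r.t. `v`, computed via a sorting permutation. -/
noncomputable def Cv {n : ℕ} (v : Finset (Fin n) → ℝ) (x : Fin n → ℝ) : ℝ :=
  ∑ i : Fin n,
    x (Tuple.sort x i) *
      (v (SUp (Tuple.sort x) (i : ℕ)) - v (SUp (Tuple.sort x) ((i : ℕ) + 1)))

/-- `f` is the restriction to `Iⁿ` of a signed Choquet integral. -/
def IsSignedChoquetOn {n : ℕ} (I : Set ℝ) (f : (Fin n → ℝ) → ℝ) : Prop :=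
  ∃ v : Finset (Fin n) → ℝ, v ∅ = 0 ∧
    ∀ σ : Equiv.Perm (Fin n), ∀ x : Fin n → ℝ, (∀ i, x i ∈ I) → Monotone (x ∘ σ) →
      f x = ∑ i : Fin n, x (σ i) * (v (SUp σ (i : ℕ)) - v (SUp σ ((i : ℕ) + 1)))

/-- `f` is the restriction to `Iⁿ` of a symmetric signed Choquet integral
`Č_v(x) = C_v(x⁺) - C_v(x⁻)`. -/
def IsSymSignedChoquetOn {n : ℕ} (I : Set ℝ) (f : (Fin n → ℝ) → ℝ) : Prop :=
  ∃ v : Finset (Fin n) → ℝ, v ∅ = 0 ∧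
    ∀ x : Fin n → ℝ, (∀ i, x i ∈ I) →
      f x = Cv v (fun i => max (x i) 0) - Cv v (fun i => max (-x i) 0)

/-- Comonotonic modularity (on tuples with entries in `D`). -/
def ComonModularOn {n : ℕ} (D : Set ℝ) (f : (Fin n → ℝ) → ℝ) : Prop :=
  ∀ x y : Fin n → ℝ, (∀ i, x i ∈ D) → (∀ i, y i ∈ D) → Comonotone x y →
    f x + f y = f (fun i => min (x i) (y i)) + f (fun i => max (x i) (y i))

/-- Comonotonic additivity (on tuples with entries in `D`). -/
def ComonAdditiveOn {n : ℕ} (D : Set ℝ) (f : (Fin n → ℝ) → ℝ) : Prop :=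
  ∀ x y : Fin n → ℝ, (∀ i, x i ∈ D) → (∀ i, y i ∈ D) → Comonotone x y →
    (∀ i, x i + y i ∈ D) → f (fun i => x i + y i) = f x + f y

/-- Comonotonic maxitivity. -/
def ComonMaxitiveOn {n : ℕ} (D : Set ℝ) (f : (Fin n → ℝ) → ℝ) : Prop :=
  ∀ x y : Fin n → ℝ, (∀ i, x i ∈ D) → (∀ i, y i ∈ D) → Comonotone x y →
    f (fun i => max (x i) (y i)) = max (f x) (f y)

/-- Comonotonic minitivity. -/
def ComonMinitiveOn {n : ℕ} (D : Set ℝ) (f : (Fin n → ℝ) → ℝ) : Prop :=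
  ∀ x y : Fin n → ℝ, (∀ i, x i ∈ D) → (∀ i, y i ∈ D) → Comonotone x y →
    f (fun i => min (x i) (y i)) = min (f x) (f y)

/-- Horizontal min-additivity. -/
def HorizMinAdditiveOn {n : ℕ} (D : Set ℝ) (f : (Fin n → ℝ) → ℝ) : Prop :=
  ∀ x : Fin n → ℝ, (∀ i, x i ∈ D) → ∀ c ∈ D, (∀ i, x i - min (x i) c ∈ D) →
    f x = f (fun i => min (x i) c) + f (fun i => x i - min (x i) c)

/-- Horizontal max-additivity. -/
def HorizMaxAdditiveOn {n : ℕ} (D : Set ℝ) (f : (Fin n → ℝ) → ℝ) : Prop :=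
  ∀ x : Fin n → ℝ, (∀ i, x i ∈ D) → ∀ c ∈ D, (∀ i, x i - max (x i) c ∈ D) →
    f x = f (fun i => max (x i) c) + f (fun i => x i - max (x i) c)

/-- Horizontal median-additivity (for `I` centered at `0`). -/
def HorizMedAdditiveOn {n : ℕ} (I : Set ℝ) (f : (Fin n → ℝ) → ℝ) : Prop :=
  ∀ x : Fin n → ℝ, (∀ i, x i ∈ I) → ∀ c ∈ I, 0 ≤ c →
    f x = f (fun i => max (-c) (min (x i) c)) + f (fun i => x i - min (x i) c)
        + f (fun i => x i - max (x i) (-c))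

/-- Invariance under horizontal min-differences (for domains of nonnegative tuples). -/
def InvHMinDiffOn {n : ℕ} (D : Set ℝ) (f : (Fin n → ℝ) → ℝ) : Prop :=
  ∀ x : Fin n → ℝ, (∀ i, x i ∈ D) → ∀ c ∈ D,
    f x - f (fun i => min (x i) c) =
      f (fun i => if x i ≤ c then 0 else x i) -
        f (fun i => min (if x i ≤ c then 0 else x i) c)

/-- Invariance under horizontal max-differences (for domains of nonpositive tuples). -/
def InvHMaxDiffOn {n : ℕ} (D : Set ℝ) (f : (Fin n → ℝ) → ℝ) : Prop :=
  ∀ x : Fin n → ℝ, (∀ i, x i ∈ D) → ∀ c ∈ D,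
    f x - f (fun i => max (x i) c) =
      f (fun i => if c ≤ x i then 0 else x i) -
        f (fun i => max (if c ≤ x i then 0 else x i) c)

/-- `⋀_{i ∈ S} x i`, with the convention that the empty infimum is `b`. -/
noncomputable def infWith {n : ℕ} (b : ℝ) (S : Finset (Fin n)) (x : Fin n → ℝ) : ℝ :=
  if h : S.Nonempty then S.inf' h x else b

/-- An `[a,b]`-valued capacity. -/
def IsCapacityOn {n : ℕ} (a b : ℝ) (μ : Finset (Fin n) → ℝ) : Prop :=
  μ ∅ = a ∧ μ Finset.univ = b ∧ ∀ S T : Finset (Fin n), S ⊆ T → μ S ≤ μ T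

/-- `f` is nondecreasing (in each argument) on tuples with entries in `D`. -/
def NondecreasingOn {n : ℕ} (D : Set ℝ) (f : (Fin n → ℝ) → ℝ) : Prop :=
  ∀ x y : Fin n → ℝ, (∀ i, x i ∈ D) → (∀ i, y i ∈ D) → (∀ i, x i ≤ y i) → f x ≤ f y


/-!
Written in Abel-summed form, `∑ₖ (s k - s (k - 1)) • v {j | s k ≤ x j}` with `s` the sorted values
of `x`, the Choquet sum along a sorting permutation does not depend on the permutation chosen.
Hence `C_v` is additive on comonotonic pairs such as `x ∧ c` and `x - x ∧ c`, and
`C_v (r • 1_S) = r • v S` for `r ≥ 0`; with `(med(-c, x, c))⁺ = x⁺ ∧ c`,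
`(x - x ∧ c)⁺ = x⁺ - x⁺ ∧ c` and `(x - x ∨ (-c))⁺ = 0` this makes `Č_v` horizontally
median-additive.

Conversely, put `v S = f 1_S`. Median-additivity at `c = 0` splits `f x = f x⁺ + f (-x⁻)`, and on
nonnegative tuples it reduces to horizontal min-additivity. Peeling off `c • 1_{supp x}`, where `c`
is the least positive value of `x`, shrinks the support, so induction identifies `f` with `C_v` on
nonnegative tuples; the same applies to `y ↦ -f (-y)`.
-/

open Finset

theorem sum_range_mul_sub_succ {R : Type*} [CommRing R] (b g : ℕ → R) (m : ℕ) :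
    ∑ k ∈ range m, b (k + 1) * (g k - g (k + 1)) =
      ∑ k ∈ range m, (b (k + 1) - b k) * g k + b 0 * g 0 - b m * g m := by
  induction m with
  | zero => simp
  | succ m ih => rw [sum_range_succ, sum_range_succ, ih]; ring

lemma monotone_sub_min (c : ℝ) : Monotone fun t : ℝ => t - min t c := by
  intro a b hab
  simp only [min_def]
  split_ifs <;> linarith

section Choquet

variable {n : ℕ} {v : Finset (Fin n) → ℝ}

/-- The sum defining `Cv v x`, taken along an arbitrary permutation `σ` instead of
`Tuple.sort x`. -/
noncomputable def choquetSum (v : Finset (Fin n) → ℝ) (σ : Equiv.Perm (Fin n)) (x : Fin n → ℝ) :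
    ℝ :=
  ∑ i : Fin n, x (σ i) * (v (SUp σ (i : ℕ)) - v (SUp σ ((i : ℕ) + 1)))

def prependZero (s : Fin n → ℝ) : ℕ → ℝ
  | 0 => 0
  | k + 1 => if h : k < n then s ⟨k, h⟩ else 0

lemma prependZero_zero (s : Fin n → ℝ) : prependZero s 0 = 0 := rfl

lemma prependZero_succ (s : Fin n → ℝ) (i : Fin n) : prependZero s ((i : ℕ) + 1) = s i := by
  simp [prependZero]

/-- With `s = x ∘ σ` sorted, this is the Choquet sum along `σ` after Abel summation
(`choquetSum_eq_levelSum`); it sees `σ` only through `x ∘ σ`. -/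
noncomputable def levelSum (v : Finset (Fin n) → ℝ) (x s : Fin n → ℝ) : ℝ :=
  ∑ k ∈ range n, (prependZero s (k + 1) - prependZero s k) *
    v (univ.filter fun j => prependZero s (k + 1) ≤ x j)

lemma SUp_self (σ : Equiv.Perm (Fin n)) : SUp σ n = ∅ := by
  ext j
  simp [SUp, Fin.is_lt]

lemma SUp_eq_filter {x : Fin n → ℝ} {σ : Equiv.Perm (Fin n)} (hσ : Monotone (x ∘ σ)) (k : Fin n)
    (hk : ∀ i : Fin n, i < k → x (σ i) < x (σ k)) :
    SUp σ k = univ.filter fun j => x (σ k) ≤ x j := by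
  ext j
  simp only [SUp, mem_image, mem_filter, mem_univ, true_and]
  constructor
  · rintro ⟨i, hki, rfl⟩
    exact hσ (Fin.le_def.mpr hki)
  · intro hj
    refine ⟨σ.symm j, ?_, σ.apply_symm_apply j⟩
    by_contra hlt
    have := hk (σ.symm j) (Fin.lt_def.mpr (not_le.mp hlt))
    simp only [Equiv.apply_symm_apply] at this
    linarith

lemma choquetSum_eq_levelSum (hv : v ∅ = 0) {x : Fin n → ℝ} {σ : Equiv.Perm (Fin n)}
    (hσ : Monotone (x ∘ σ)) : choquetSum v σ x = levelSum v x (x ∘ σ) := by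
  set b := prependZero (x ∘ σ) with hb
  have hbσ : ∀ i : Fin n, b (i + 1) = x (σ i) := prependZero_succ _
  have habel : choquetSum v σ x =
      ∑ k ∈ range n, b (k + 1) * (v (SUp σ k) - v (SUp σ (k + 1))) := by
    rw [choquetSum, ← Fin.sum_univ_eq_sum_range
      (fun k => b (k + 1) * (v (SUp σ k) - v (SUp σ (k + 1))))]
    simp only [hbσ]
  rw [habel, sum_range_mul_sub_succ, SUp_self, hv, hb, prependZero_zero, zero_mul, mul_zero,
    add_zero, sub_zero, levelSum]
  refine sum_congr rfl fun k hk => ?_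
  have hk : k < n := mem_range.mp hk
  -- where the sorted values jump, `SUp σ k` is an upper level set of `x`
  rcases eq_or_ne (b (k + 1)) (b k) with heq | hne
  · simp [← hb, heq]
  rw [← hb, hbσ ⟨k, hk⟩, SUp_eq_filter hσ ⟨k, hk⟩ fun i hi => ?_]
  have hik : (i : ℕ) < k := hi
  obtain ⟨m, rfl⟩ : ∃ m, k = m + 1 := ⟨k - 1, by omega⟩
  rw [hbσ ⟨m, by omega⟩, hbσ ⟨m + 1, hk⟩] at hne
  have hstep : x (σ ⟨m, by omega⟩) < x (σ ⟨m + 1, hk⟩) :=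
    (hσ (Fin.mk_le_mk.mpr m.le_succ)).lt_of_ne hne.symm
  exact (hσ (Fin.le_iff_val_le_val.mpr (by simp; omega) : i ≤ ⟨m, by omega⟩)).trans_lt hstep

lemma Cv_eq_choquetSum (hv : v ∅ = 0) {x : Fin n → ℝ} {σ : Equiv.Perm (Fin n)}
    (hσ : Monotone (x ∘ σ)) : Cv v x = choquetSum v σ x := by
  rw [choquetSum_eq_levelSum hv hσ, Tuple.comp_sort_eq_comp_iff_monotone.mpr hσ,
    ← choquetSum_eq_levelSum hv (Tuple.monotone_sort x)]
  rfl

lemma choquetSum_add (v : Finset (Fin n) → ℝ) (σ : Equiv.Perm (Fin n)) (x y : Fin n → ℝ) :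
    choquetSum v σ (x + y) = choquetSum v σ x + choquetSum v σ y := by
  simp only [choquetSum, Pi.add_apply, add_mul, sum_add_distrib]

lemma Cv_eq_Cv_min_add_Cv_sub_min (hv : v ∅ = 0) (x : Fin n → ℝ) (c : ℝ) :
    Cv v x = Cv v (fun i => min (x i) c) + Cv v (fun i => x i - min (x i) c) := by
  have hσ := Tuple.monotone_sort x
  have hmin : Monotone ((fun i => min (x i) c) ∘ Tuple.sort x) := hσ.min monotone_const
  have hsub : Monotone ((fun i => x i - min (x i) c) ∘ Tuple.sort x) :=
    (monotone_sub_min c).comp hσ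
  rw [Cv_eq_choquetSum hv hσ, Cv_eq_choquetSum hv hmin, Cv_eq_choquetSum hv hsub,
    ← choquetSum_add]
  exact congrArg _ (funext fun i => by simp)

lemma Cv_indTuple (hv : v ∅ = 0) (S : Finset (Fin n)) {r : ℝ} (hr : 0 ≤ r) :
    Cv v (indTuple S r) = r * v S := by
  rcases hr.eq_or_lt with rfl | hr
  · simp [Cv, indTuple]
  set x := indTuple S r
  have hx : ∀ j, x j = if j ∈ S then r else 0 := fun _ => rfl
  set σ := Tuple.sort x
  have hσ : Monotone (x ∘ σ) := Tuple.monotone_sort x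
  set b := prependZero (x ∘ σ) with hb
  have hbσ : ∀ i : Fin n, b (i + 1) = x (σ i) := prependZero_succ _
  -- the sorted values of `r • 1_S` only increase at level `r`, whose upper level set is `S`
  have hterm : ∀ k < n, (b (k + 1) - b k) * v (univ.filter fun j => b (k + 1) ≤ x j) =
      (b (k + 1) - b k) * v S := by
    intro k hk
    rw [hbσ ⟨k, hk⟩]
    by_cases hkS : σ ⟨k, hk⟩ ∈ S
    · congr 2
      ext j
      by_cases hj : j ∈ S <;> simp [hx, hkS, hj, hr]
    · suffices hbk : b k = 0 by simp [hx, hkS, hbk]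
      cases k with
      | zero => rfl
      | succ m =>
        have hle := hσ (Fin.mk_le_mk.mpr (Nat.le_succ m) : (⟨m, by omega⟩ : Fin n) ≤ ⟨m + 1, hk⟩)
        rw [hbσ ⟨m, by omega⟩]
        simp only [Function.comp_apply, hx, hkS, if_false] at hle ⊢
        split_ifs at hle ⊢ <;> linarith
  rw [Cv_eq_choquetSum hv hσ, choquetSum_eq_levelSum hv hσ, levelSum,
    sum_congr rfl fun k hk => hterm k (mem_range.mp hk), ← sum_mul, sum_range_sub b, hb,
    prependZero_zero, sub_zero]
  rcases S.eq_empty_or_nonempty with rfl | ⟨j, hj⟩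
  · simp [hv]
  have hn : 0 < n := Fin.pos j
  have hlast : b n = x (σ ⟨n - 1, by omega⟩) := by
    rw [← hbσ]; congr; simp; omega
  have hmax : x j ≤ x (σ ⟨n - 1, by omega⟩) := by
    simpa using hσ (Fin.le_def.mpr (by simp; omega) : σ.symm j ≤ ⟨n - 1, by omega⟩)
  rw [← hb, hlast]
  congr 1
  simp only [hx, hj, if_true] at hmax ⊢
  split_ifs at hmax ⊢ <;> linarith

lemma Cv_zero (v : Finset (Fin n) → ℝ) : Cv v (fun _ => 0) = 0 := by
  simp [Cv]

lemma eq_Cv_of_horizMinAdditiveOn {D : Set ℝ} (hD : D.OrdConnected) (hD0 : (0 : ℝ) ∈ D)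
    (hDnn : ∀ t ∈ D, 0 ≤ t) {g : (Fin n → ℝ) → ℝ} (hg : HorizMinAdditiveOn D g)
    (hv : v ∅ = 0) (hind : ∀ r ∈ D, ∀ S, g (indTuple S r) = r * v S)
    {x : Fin n → ℝ} (hx : ∀ i, x i ∈ D) : g x = Cv v x := by
  induction hN : #(univ.filter fun i => x i ≠ 0) using Nat.strong_induction_on generalizing x
    with | _ N ih =>
  set S := univ.filter fun i => x i ≠ 0 with hS
  rcases S.eq_empty_or_nonempty with hS0 | hSne
  · have hx0 : x = indTuple ∅ 0 := funext fun i => by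
      simpa [indTuple, hS] using filter_eq_empty_iff.mp hS0 (mem_univ i)
    rw [hx0, hind 0 hD0, Cv_indTuple hv ∅ le_rfl]
  obtain ⟨i₀, hi₀, hc⟩ := S.exists_mem_eq_inf' hSne x
  set c := S.inf' hSne x
  have hc0 : 0 < c := hc ▸ (hDnn _ (hx i₀)).lt_of_ne (Ne.symm (mem_filter.mp hi₀).2)
  have hcD : c ∈ D := hc ▸ hx i₀
  have hmin : (fun i => min (x i) c) = indTuple S c := funext fun i => by
    by_cases hi : x i = 0
    · simp [indTuple, hS, hi, hc0.le]
    · have hci : c ≤ x i := S.inf'_le x (by simp [hS, hi])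
      simp [indTuple, hS, hi, hci]
  set x' := fun i => x i - min (x i) c
  have hx' : ∀ i, x' i ∈ D := fun i => hD.out hD0 (hx i)
    ⟨sub_nonneg.2 (min_le_left _ _), sub_le_self _ (le_min (hDnn _ (hx i)) hc0.le)⟩
  have hcard : #(univ.filter fun i => x' i ≠ 0) < N := by
    rw [← hN]
    refine card_lt_card ((ssubset_iff_of_subset fun i hi => ?_).mpr ⟨i₀, hi₀, ?_⟩)
    · by_contra hiS
      simp [x', hS] at hi hiS
      simp [hiS, hc0.le] at hi
    · simp [x', ← hc]
  calc g x = g (indTuple S c) + g x' := by rw [← hmin]; exact hg x hx c hcD hx'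
    _ = Cv v (indTuple S c) + Cv v x' := by
      rw [hind c hcD S, Cv_indTuple hv S hc0.le, ih _ hcard hx' rfl]
    _ = Cv v x := by rw [← hmin]; exact (Cv_eq_Cv_min_add_Cv_sub_min hv x c).symm

end Choquet

section Median
variable {n : ℕ} {I : Set ℝ}

lemma HorizMedAdditiveOn.add {f g : (Fin n → ℝ) → ℝ} (hf : HorizMedAdditiveOn I f)
    (hg : HorizMedAdditiveOn I g) : HorizMedAdditiveOn I (f + g) := by
  intro x hx c hc hc0
  simp only [Pi.add_apply, hf x hx c hc hc0, hg x hx c hc hc0]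
  ring

lemma HorizMedAdditiveOn.neg_comp_neg (hsymm : ∀ x ∈ I, -x ∈ I) {f : (Fin n → ℝ) → ℝ}
    (hf : HorizMedAdditiveOn I f) : HorizMedAdditiveOn I fun y => -f (-y) := by
  intro x hx c hc hc0
  have h := hf (-x) (fun i => hsymm _ (hx i)) c hc hc0
  have h₁ : (fun i => max (-c) (min ((-x) i) c)) = -fun i => max (-c) (min (x i) c) :=
    funext fun i => by simp only [Pi.neg_apply, min_def, max_def]; split_ifs <;> linarith
  have h₂ : (fun i => (-x) i - min ((-x) i) c) = -fun i => x i - max (x i) (-c) :=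
    funext fun i => by simp only [Pi.neg_apply, min_def, max_def]; split_ifs <;> linarith
  have h₃ : (fun i => (-x) i - max ((-x) i) (-c)) = -fun i => x i - min (x i) c :=
    funext fun i => by simp only [Pi.neg_apply, min_def, max_def]; split_ifs <;> linarith
  rw [h₁, h₂, h₃] at h
  beta_reduce
  linarith

lemma HorizMedAdditiveOn.of_univ (hI : I.OrdConnected) (h0 : (0 : ℝ) ∈ I)
    {F f : (Fin n → ℝ) → ℝ} (hF : HorizMedAdditiveOn Set.univ F)
    (hfF : ∀ x, (∀ i, x i ∈ I) → f x = F x) : HorizMedAdditiveOn I f := by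
  intro x hx c _ hc0
  have hmem : ∀ t : Fin n → ℝ, (∀ i, t i ∈ Set.uIcc 0 (x i)) → ∀ i, t i ∈ I :=
    fun t ht i => hI.uIcc_subset h0 (hx i) (ht i)
  rw [hfF x hx, hfF _ (hmem _ fun i => ?_), hfF _ (hmem _ fun i => ?_),
    hfF _ (hmem _ fun i => ?_)]
  · exact hF x (fun _ => trivial) c trivial hc0
  all_goals
    rw [Set.mem_uIcc]
    rcases le_total 0 (x i) with h | h
    · left; constructor <;> simp only [min_def, max_def] <;> split_ifs <;> linarith
    · right; constructor <;> simp only [min_def, max_def] <;> split_ifs <;> linarith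

lemma HorizMedAdditiveOn.horizMinAdditiveOn_nonneg {f : (Fin n → ℝ) → ℝ}
    (hf : HorizMedAdditiveOn I f) (hf0 : f 0 = 0) : HorizMinAdditiveOn (I ∩ Set.Ici 0) f := by
  intro x hx c hc _
  have h := hf x (fun i => (hx i).1) c hc.1 hc.2
  have hc0 : 0 ≤ c := hc.2
  have h₁ : (fun i => max (-c) (min (x i) c)) = fun i => min (x i) c := funext fun i => by
    have hxi : 0 ≤ x i := (hx i).2
    exact max_eq_right (le_min (by linarith) (by linarith))
  have h₃ : (fun i => x i - max (x i) (-c)) = 0 := funext fun i => by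
    have hxi : 0 ≤ x i := (hx i).2
    simp [max_eq_left (show -c ≤ x i by linarith)]
  rwa [h₁, h₃, hf0, add_zero] at h

lemma HorizMedAdditiveOn.eq_posPart_add_neg_negPart {f : (Fin n → ℝ) → ℝ} (hf : HorizMedAdditiveOn I f)
    (h0 : (0 : ℝ) ∈ I) (hf0 : f 0 = 0) {x : Fin n → ℝ} (hx : ∀ i, x i ∈ I) :
    f x = f (fun i => max (x i) 0) + f (-fun i => max (-x i) 0) := by
  have h := hf x hx 0 h0 le_rfl
  rwa [show (fun i => max (-0) (min (x i) 0)) = 0 from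
      funext fun i => by simp only [neg_zero, Pi.zero_apply, max_eq_left (min_le_right _ _)],
    show (fun i => x i - min (x i) 0) = fun i => max (x i) 0 from
      funext fun i => by simp only [min_def, max_def]; split_ifs <;> linarith,
    show (fun i => x i - max (x i) (-0)) = -fun i => max (-x i) 0 from
      funext fun i => by simp only [Pi.neg_apply, max_def]; split_ifs <;> linarith,
    hf0, zero_add] at h

end Median

section Symmetric
variable {n : ℕ} {v : Finset (Fin n) → ℝ}

lemma indTuple_zero (S : Finset (Fin n)) : indTuple S 0 = 0 := by
  ext i; simp [indTuple]

lemma indTuple_empty (r : ℝ) : indTuple (∅ : Finset (Fin n)) r = 0 := by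
  ext i; simp [indTuple]

lemma neg_indTuple (S : Finset (Fin n)) (r : ℝ) : -indTuple S r = indTuple S (-r) := by
  ext i; by_cases hi : i ∈ S <;> simp [indTuple, hi]

lemma indTuple_mem {I : Set ℝ} (h0 : (0 : ℝ) ∈ I) {r : ℝ} (hr : r ∈ I) (S : Finset (Fin n))
    (i : Fin n) : indTuple S r i ∈ I := by
  unfold indTuple; split_ifs <;> assumption

/-- `Č_v`: `IsSymSignedChoquetOn I f` says that `f = symCv v` on `Iⁿ`. -/
noncomputable def symCv (v : Finset (Fin n) → ℝ) (x : Fin n → ℝ) : ℝ :=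
  Cv v (fun i => max (x i) 0) - Cv v (fun i => max (-x i) 0)

lemma horizMedAdditiveOn_Cv_posPart (hv : v ∅ = 0) :
    HorizMedAdditiveOn Set.univ fun x : Fin n → ℝ => Cv v fun i => max (x i) 0 := by
  intro x _ c _ hc
  have h₁ : (fun i => max (max (-c) (min (x i) c)) 0) = fun i => min (max (x i) 0) c :=
    funext fun i => by simp only [min_def, max_def]; split_ifs <;> linarith
  have h₂ : (fun i => max (x i - min (x i) c) 0) =
      fun i => max (x i) 0 - min (max (x i) 0) c :=
    funext fun i => by simp only [min_def, max_def]; split_ifs <;> linarith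
  have h₃ : (fun i => max (x i - max (x i) (-c)) 0) = fun _ => 0 :=
    funext fun i => by simp only [max_def]; split_ifs <;> linarith
  beta_reduce
  rw [h₁, h₂, h₃, Cv_zero, add_zero, ← Cv_eq_Cv_min_add_Cv_sub_min hv]

lemma horizMedAdditiveOn_symCv (hv : v ∅ = 0) : HorizMedAdditiveOn Set.univ (symCv v) := by
  have hP := horizMedAdditiveOn_Cv_posPart hv
  convert hP.add (hP.neg_comp_neg fun _ _ => Set.mem_univ _) using 1
  ext x
  simp [symCv, sub_eq_add_neg]

lemma symCv_indTuple (hv : v ∅ = 0) (S : Finset (Fin n)) (r : ℝ) :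
    symCv v (indTuple S r) = r * v S := by
  have h₁ : (fun i => max (indTuple S r i) 0) = indTuple S (max r 0) := funext fun i => by
    by_cases hi : i ∈ S <;> simp [indTuple, hi]
  have h₂ : (fun i => max (-indTuple S r i) 0) = indTuple S (max (-r) 0) := funext fun i => by
    by_cases hi : i ∈ S <;> simp [indTuple, hi]
  rw [symCv, h₁, h₂, Cv_indTuple hv S (le_max_right _ _), Cv_indTuple hv S (le_max_right _ _),
    ← sub_mul, max_zero_sub_max_neg_zero_eq_self]

lemma HorizMedAdditiveOn.eq_symCv {I : Set ℝ} (hI : I.OrdConnected) (h0 : (0 : ℝ) ∈ I)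
    (hsymm : ∀ x ∈ I, -x ∈ I) {f : (Fin n → ℝ) → ℝ} (hf : HorizMedAdditiveOn I f)
    (hv : v ∅ = 0) (hind : ∀ r ∈ I, ∀ S, f (indTuple S r) = r * v S) {x : Fin n → ℝ}
    (hx : ∀ i, x i ∈ I) : f x = symCv v x := by
  have hf0 : f 0 = 0 := by simpa [indTuple_zero] using hind 0 h0 ∅
  have hD : (I ∩ Set.Ici 0).OrdConnected := hI.inter Set.ordConnected_Ici
  have hD0 : (0 : ℝ) ∈ I ∩ Set.Ici 0 := ⟨h0, Set.self_mem_Ici⟩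
  have hmax : ∀ a ∈ I, max a 0 ∈ I ∩ Set.Ici 0 := fun a ha =>
    ⟨hI.uIcc_subset h0 ha (by rw [Set.mem_uIcc]; rcases le_total 0 a with h | h <;> simp [h]),
      Set.mem_Ici.mpr (le_max_right _ _)⟩
  have hpos : f (fun i => max (x i) 0) = Cv v fun i => max (x i) 0 :=
    eq_Cv_of_horizMinAdditiveOn hD hD0 (fun _ ht => ht.2) (hf.horizMinAdditiveOn_nonneg hf0) hv
      (fun r hr => hind r hr.1) fun i => hmax _ (hx i)
  have hneg : -f (-fun i => max (-x i) 0) = Cv v fun i => max (-x i) 0 :=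
    eq_Cv_of_horizMinAdditiveOn hD hD0 (fun _ ht => ht.2)
      ((hf.neg_comp_neg hsymm).horizMinAdditiveOn_nonneg (by simp [hf0])) hv
      (fun r hr S => by simp [neg_indTuple, hind (-r) (hsymm r hr.1)])
      fun i => hmax _ (hsymm _ (hx i))
  rw [hf.eq_posPart_add_neg_negPart h0 hf0 hx, hpos, symCv, ← hneg]
  ring

end Symmetric

theorem statement2_general (n : ℕ) (I : Set ℝ) (hI : I.OrdConnected)
    (hsymm : ∀ x : ℝ, x ∈ I → -x ∈ I) (h11 : Set.Icc (-1 : ℝ) 1 ⊆ I)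
    (f : (Fin n → ℝ) → ℝ) :
    IsSymSignedChoquetOn I f ↔
      (HorizMedAdditiveOn I f ∧
        ∀ c ∈ I, ∀ x ∈ I, c * x ∈ I → ∀ S : Finset (Fin n),
          f (indTuple S (c * x)) = c * f (indTuple S x)) := by
  have h0 : (0 : ℝ) ∈ I := h11 ⟨by norm_num, by norm_num⟩
  have h1 : (1 : ℝ) ∈ I := h11 ⟨by norm_num, le_rfl⟩
  constructor
  · rintro ⟨v, hv, hf⟩
    refine ⟨(horizMedAdditiveOn_symCv hv).of_univ hI h0 hf, fun c _ x hx hcx S => ?_⟩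
    rw [hf _ (indTuple_mem h0 hcx S), hf _ (indTuple_mem h0 hx S), ← symCv, ← symCv,
      symCv_indTuple hv, symCv_indTuple hv, mul_assoc]
  · rintro ⟨hmed, hhom⟩
    set v := fun S => f (indTuple S 1)
    have hind : ∀ r ∈ I, ∀ S, f (indTuple S r) = r * v S := fun r hr S => by
      simpa using hhom r hr 1 h1 (by simpa) S
    have hv : v ∅ = 0 := by simpa [v, indTuple_empty] using hind 0 h0 ∅
    exact ⟨v, hv, fun x hx => hmed.eq_symCv hI h0 hsymm hv hind hx⟩

theorem statement2 (n : ℕ) (hn : 0 < n) (I : Set ℝ) (hI : I.OrdConnected)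
    (hsymm : ∀ x : ℝ, x ∈ I → -x ∈ I) (h11 : Set.Icc (-1 : ℝ) 1 ⊆ I)
    (f : (Fin n → ℝ) → ℝ) :
    IsSymSignedChoquetOn I f ↔
      (HorizMedAdditiveOn I f ∧
        ∀ c ∈ I, ∀ x ∈ I, c * x ∈ I → ∀ S : Finset (Fin n),
          f (indTuple S (c * x)) = c * f (indTuple S x)) :=
  statement2_general n I hI hsymm h11 f
end

section
/- Assume 0 ∈ I. For a function f : Iⁿ → ℝ the following are equivalent: (a) f is comonotonically modular; (b) the restrictions f|_{I₊ⁿ} and f|_{I₋ⁿ} are comonotonically modular and f(x) + f(0) = f(x⁺) + f(−x⁻) for every x ∈ Iⁿ; (c) f|_{I₊ⁿ} is invariant under horizontal min-differences, f|_{I₋ⁿ} is invariant under horizontal max-differences, and f(x) + f(0) = f(x⁺) + f(−x⁻) for every x ∈ Iⁿ. -/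
open Set Pointwise

def ModularAt {n : ℕ} (f : (Fin n → ℝ) → ℝ) (x y : Fin n → ℝ) : Prop :=
  f x + f y = f (fun i => min (x i) (y i)) + f (fun i => max (x i) (y i))

/-- `x ∧ c` -/
def capAt {n : ℕ} (c : ℝ) (x : Fin n → ℝ) : Fin n → ℝ := fun i => min (x i) c

/-- `[x]_c` -/
noncomputable def zeroBelow {n : ℕ} (c : ℝ) (x : Fin n → ℝ) : Fin n → ℝ :=
  fun i => if x i ≤ c then 0 else x i

noncomputable def posValues {n : ℕ} (x : Fin n → ℝ) : Finset ℝ :=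
  (Finset.univ.image x).filter (0 < ·)

theorem mem_posValues {n : ℕ} {x : Fin n → ℝ} {v : ℝ} :
    v ∈ posValues x ↔ 0 < v ∧ ∃ i, x i = v := by
  simp [posValues, and_comm]

section Comonotone

variable {n : ℕ} {x y : Fin n → ℝ}

theorem Comonotone.refl (x : Fin n → ℝ) : Comonotone x x :=
  ⟨Tuple.sort x, Tuple.monotone_sort x, Tuple.monotone_sort x⟩

theorem comonotone_const (x : Fin n → ℝ) (r : ℝ) : Comonotone x (fun _ => r) :=
  ⟨Tuple.sort x, Tuple.monotone_sort x, monotone_const⟩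

theorem Comonotone.le_of_lt (h : Comonotone x y) {i j : Fin n} (hx : x j < x i) :
    y j ≤ y i := by
  obtain ⟨σ, hxσ, hyσ⟩ := h
  rcases le_total (σ.symm i) (σ.symm j) with hij | hji
  · have := hxσ hij
    simp only [Function.comp_apply, Equiv.apply_symm_apply] at this
    linarith
  · simpa using hyσ hji

theorem Comonotone.map {φ ψ : ℝ → ℝ} {s t : Set ℝ} (h : Comonotone x y)
    (hφ : MonotoneOn φ s) (hψ : MonotoneOn ψ t) (hx : ∀ i, x i ∈ s)
    (hy : ∀ i, y i ∈ t) :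
    Comonotone (fun i => φ (x i)) (fun i => ψ (y i)) := by
  obtain ⟨σ, hxσ, hyσ⟩ := h
  exact ⟨σ, fun _ _ hab => hφ (hx _) (hx _) (hxσ hab),
    fun _ _ hab => hψ (hy _) (hy _) (hyσ hab)⟩

theorem Comonotone.map_monotone {φ : ℝ → ℝ} (h : Comonotone x y) (hφ : Monotone φ) :
    Comonotone (fun i => φ (x i)) (fun i => φ (y i)) :=
  h.map (hφ.monotoneOn _) (hφ.monotoneOn _) (fun _ => mem_univ _) (fun _ => mem_univ _)

theorem Comonotone.neg (h : Comonotone x y) : Comonotone (-x) (-y) := by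
  obtain ⟨σ, hxσ, hyσ⟩ := h
  refine ⟨Fin.revPerm.trans σ, fun a b hab => ?_, fun a b hab => ?_⟩
  · simpa using hxσ (Fin.rev_le_rev.mpr hab)
  · simpa using hyσ (Fin.rev_le_rev.mpr hab)

end Comonotone

section Modular

variable {n : ℕ} {f : (Fin n → ℝ) → ℝ} {x y : Fin n → ℝ}

theorem modularAt_of_le (h : ∀ i, x i ≤ y i) : ModularAt f x y := by
  simp only [ModularAt, min_eq_left (h _), max_eq_right (h _)]

theorem ModularAt.symm (h : ModularAt f x y) : ModularAt f y x := by
  have hmin : (fun i => min (y i) (x i)) = fun i => min (x i) (y i) :=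
    funext fun _ => min_comm _ _
  have hmax : (fun i => max (y i) (x i)) = fun i => max (x i) (y i) :=
    funext fun _ => max_comm _ _
  rw [ModularAt, hmin, hmax, add_comm]
  exact h

theorem Comonotone.modularAt_of_forall_eq_zero_or_eq {c : ℝ} (h : Comonotone x y)
    (hx : ∀ i, x i = 0 ∨ x i = c) (hy : ∀ i, y i = 0 ∨ y i = c) : ModularAt f x y := by
  by_cases hle : ∀ i, x i ≤ y i
  · exact modularAt_of_le hle
  push Not at hle
  obtain ⟨i, hi⟩ := hle
  refine (modularAt_of_le fun j => ?_).symm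
  by_contra! hj
  -- the only consistent case is a crossing `x j < x i`, `y i < y j`, excluded by comonotonicity
  have key : x j < x i → y j ≤ y i := h.le_of_lt
  rcases hx i with hxi | hxi <;> rcases hy i with hyi | hyi <;> rcases hx j with hxj | hxj <;>
    rcases hy j with hyj | hyj <;> first | linarith | linarith [key (by linarith)]

end Modular

section Cut

variable {n : ℕ} {c : ℝ} {x y : Fin n → ℝ}

theorem capAt_min :
    capAt c (fun i => min (x i) (y i)) = fun i => min (capAt c x i) (capAt c y i) :=
  funext fun _ => inf_inf_distrib_right _ _ _

theorem capAt_max :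
    capAt c (fun i => max (x i) (y i)) = fun i => max (capAt c x i) (capAt c y i) :=
  funext fun _ => min_max_distrib_right _ _ _

theorem zeroBelow_min (hc : 0 ≤ c) :
    zeroBelow c (fun i => min (x i) (y i)) = fun i => min (zeroBelow c x i) (zeroBelow c y i) :=
  funext fun _ => by simp only [zeroBelow]; grind

theorem zeroBelow_max (hc : 0 ≤ c) :
    zeroBelow c (fun i => max (x i) (y i)) = fun i => max (zeroBelow c x i) (zeroBelow c y i) :=
  funext fun _ => by simp only [zeroBelow]; grind

theorem min_capAt_zeroBelow (hc : 0 ≤ c) (hx : ∀ i, 0 ≤ x i) :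
    (fun i => min (capAt c x i) (zeroBelow c x i)) = capAt c (zeroBelow c x) :=
  funext fun i => by have := hx i; simp only [capAt, zeroBelow]; grind

theorem max_capAt_zeroBelow (hx : ∀ i, 0 ≤ x i) :
    (fun i => max (capAt c x i) (zeroBelow c x i)) = x :=
  funext fun i => by have := hx i; simp only [capAt, zeroBelow]; grind

theorem monotoneOn_zeroBelow (hc : 0 ≤ c) :
    MonotoneOn (fun t : ℝ => if t ≤ c then 0 else t) (Ici 0) := by
  intro a ha b _ hab
  simp only [mem_Ici] at ha
  grind

theorem Comonotone.zeroBelow (h : Comonotone x y) (hc : 0 ≤ c) (hx : ∀ i, 0 ≤ x i)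
    (hy : ∀ i, 0 ≤ y i) : Comonotone (zeroBelow c x) (zeroBelow c y) :=
  h.map (monotoneOn_zeroBelow hc) (monotoneOn_zeroBelow hc) hx hy

theorem Comonotone.capAt (h : Comonotone x y) : Comonotone (capAt c x) (capAt c y) :=
  h.map_monotone fun _ _ hab => min_le_min_right c hab

theorem capAt_eq_zero_or_eq (hc : 0 ≤ c) (hx : ∀ i, 0 ≤ x i)
    (hxc : ∀ i, 0 < x i → c ≤ x i) (i : Fin n) : capAt c x i = 0 ∨ capAt c x i = c := by
  rcases (hx i).eq_or_lt with h | h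
  · left; simp [capAt, ← h, hc]
  · right; exact min_eq_right (hxc i h)

theorem capAt_zeroBelow_eq_zero_or_eq (hc : 0 ≤ c) (i : Fin n) :
    capAt c (zeroBelow c x) i = 0 ∨ capAt c (zeroBelow c x) i = c := by
  simp only [capAt, zeroBelow]
  grind

theorem zeroBelow_mem {D : Set ℝ} (h0 : 0 ∈ D) (hx : ∀ i, x i ∈ D) (i : Fin n) :
    zeroBelow c x i ∈ D := by
  unfold zeroBelow; split_ifs
  exacts [h0, hx i]

theorem card_posValues_zeroBelow_lt (hc : c ∈ posValues x ∪ posValues y) :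
    (posValues (zeroBelow c x) ∪ posValues (zeroBelow c y)).card
      < (posValues x ∪ posValues y).card := by
  refine Finset.card_lt_card (Finset.ssubset_of_subset_of_ssubset
    (s₂ := (posValues x ∪ posValues y).filter (c < ·)) ?_
    (Finset.filter_ssubset.2 ⟨c, hc, lt_irrefl c⟩))
  intro v hv
  simp only [Finset.mem_union, Finset.mem_filter, mem_posValues, zeroBelow] at hv ⊢
  grind

end Cut

section NonnegativeOrthant

variable {n : ℕ} {D : Set ℝ} {f : (Fin n → ℝ) → ℝ}

theorem InvHMinDiffOn.modularAt {c : ℝ} {x y : Fin n → ℝ} (hf : InvHMinDiffOn D f)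
    (hc : c ∈ D) (hc0 : 0 ≤ c) (hx : ∀ i, x i ∈ D) (hy : ∀ i, y i ∈ D)
    (hcap : ModularAt f (capAt c x) (capAt c y))
    (hcut : ModularAt f (zeroBelow c x) (zeroBelow c y))
    (hcapcut : ModularAt f (capAt c (zeroBelow c x)) (capAt c (zeroBelow c y))) :
    ModularAt f x y := by
  have key : ∀ z : Fin n → ℝ, (∀ i, z i ∈ D) →
      f z - f (capAt c z) = f (zeroBelow c z) - f (capAt c (zeroBelow c z)) :=
    fun z hz => hf z hz c hc
  have hmin := key _ fun i => min_rec' (· ∈ D) (hx i) (hy i)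
  have hmax := key _ fun i => max_rec' (· ∈ D) (hx i) (hy i)
  rw [capAt_min, zeroBelow_min hc0, capAt_min] at hmin
  rw [capAt_max, zeroBelow_max hc0, capAt_max] at hmax
  unfold ModularAt at *
  linarith [key x hx, key y hy]

theorem comonModularOn_of_invHMinDiffOn (hD : D ⊆ Ici 0) (h0 : 0 ∈ D)
    (hf : InvHMinDiffOn D f) : ComonModularOn D f := by
  intro x y hx hy hxy
  induction hN : (posValues x ∪ posValues y).card using Nat.strong_induction_on
    generalizing x y with
  | _ N ih =>
  have hx0 : ∀ i, 0 ≤ x i := fun i => hD (hx i)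
  have hy0 : ∀ i, 0 ≤ y i := fun i => hD (hy i)
  rcases (posValues x ∪ posValues y).eq_empty_or_nonempty with hS | hS
  · refine modularAt_of_le fun i => (not_lt.mp fun hxi => ?_).trans (hy0 i)
    exact Finset.notMem_empty _
      (hS ▸ Finset.mem_union_left _ (mem_posValues.mpr ⟨hxi, i, rfl⟩))
  set c := (posValues x ∪ posValues y).min' hS
  have hcS : c ∈ posValues x ∪ posValues y := Finset.min'_mem _ hS
  obtain ⟨hc0, hcD⟩ : 0 < c ∧ c ∈ D := by
    rcases Finset.mem_union.mp hcS with h | h <;> obtain ⟨hc0, i, hi⟩ := mem_posValues.mp h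
    exacts [⟨hc0, hi ▸ hx i⟩, ⟨hc0, hi ▸ hy i⟩]
  have hmin : ∀ v ∈ posValues x ∪ posValues y, c ≤ v := fun v hv => Finset.min'_le _ v hv
  have hxc : ∀ i, 0 < x i → c ≤ x i := fun i hi => hmin _ (by simp [mem_posValues, hi])
  have hyc : ∀ i, 0 < y i → c ≤ y i := fun i hi => hmin _ (by simp [mem_posValues, hi])
  refine hf.modularAt hcD hc0.le hx hy ?_
    (ih _ (hN ▸ card_posValues_zeroBelow_lt hcS) _ _ (zeroBelow_mem h0 hx)
      (zeroBelow_mem h0 hy) (hxy.zeroBelow hc0.le hx0 hy0) rfl) ?_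
  · exact hxy.capAt.modularAt_of_forall_eq_zero_or_eq (capAt_eq_zero_or_eq hc0.le hx0 hxc)
      (capAt_eq_zero_or_eq hc0.le hy0 hyc)
  · exact (hxy.zeroBelow hc0.le hx0 hy0).capAt.modularAt_of_forall_eq_zero_or_eq
      (capAt_zeroBelow_eq_zero_or_eq hc0.le) (capAt_zeroBelow_eq_zero_or_eq hc0.le)

theorem invHMinDiffOn_of_comonModularOn (hD : D ⊆ Ici 0) (h0 : 0 ∈ D)
    (hf : ComonModularOn D f) : InvHMinDiffOn D f := by
  intro x hx c hc
  have hx0 : ∀ i, 0 ≤ x i := fun i => hD (hx i)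
  have hcomon : Comonotone (capAt c x) (zeroBelow c x) :=
    (Comonotone.refl x).map ((monotone_id.min monotone_const).monotoneOn _)
      (monotoneOn_zeroBelow (hD hc)) (fun _ => mem_univ _) hx0
  have h := hf (capAt c x) (zeroBelow c x) (fun i => min_rec' (· ∈ D) (hx i) hc)
    (zeroBelow_mem h0 hx) hcomon
  rw [min_capAt_zeroBelow (hD hc) hx0, max_capAt_zeroBelow hx0] at h
  change f x - f (capAt c x) = f (zeroBelow c x) - f (capAt c (zeroBelow c x))
  linarith

theorem comonModularOn_iff_invHMinDiffOn (hD : D ⊆ Ici 0) (h0 : 0 ∈ D) :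
    ComonModularOn D f ↔ InvHMinDiffOn D f :=
  ⟨invHMinDiffOn_of_comonModularOn hD h0, comonModularOn_of_invHMinDiffOn hD h0⟩

end NonnegativeOrthant

section Reflection

variable {n : ℕ} {D : Set ℝ} {f : (Fin n → ℝ) → ℝ}

theorem ComonModularOn.comp_neg (hf : ComonModularOn D f) :
    ComonModularOn (-D) (fun x => f (-x)) := by
  intro x y hx hy hxy
  have h := hf (-x) (-y) hx hy hxy.neg
  have hmin : (-fun i => min (x i) (y i)) = fun i => max ((-x) i) ((-y) i) :=
    funext fun i => by simp [max_neg_neg]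
  have hmax : (-fun i => max (x i) (y i)) = fun i => min ((-x) i) ((-y) i) :=
    funext fun i => by simp [min_neg_neg]
  simp only [hmin, hmax]
  linarith

theorem comonModularOn_neg_iff :
    ComonModularOn (-D) (fun x => f (-x)) ↔ ComonModularOn D f := by
  refine ⟨fun h => ?_, ComonModularOn.comp_neg⟩
  simpa only [neg_neg] using h.comp_neg

theorem invHMinDiffOn_neg_iff :
    InvHMinDiffOn (-D) (fun x => f (-x)) ↔ InvHMaxDiffOn D f := by
  constructor
  · intro h x hx c hc
    have := h (-x) (by simpa using hx) (-c) (by simpa using hc)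
    convert this using 3 <;> funext i <;> simp only [Pi.neg_apply] <;> grind
  · intro h x hx c hc
    have := h (-x) hx (-c) hc
    convert this using 3 <;> funext i <;> simp only [Pi.neg_apply] <;> grind

theorem comonModularOn_iff_invHMaxDiffOn (hD : D ⊆ Iic 0) (h0 : 0 ∈ D) :
    ComonModularOn D f ↔ InvHMaxDiffOn D f := by
  rw [← comonModularOn_neg_iff, ← invHMinDiffOn_neg_iff]
  exact comonModularOn_iff_invHMinDiffOn (fun r hr => show 0 ≤ r from neg_nonpos.mp (hD hr))
    (by simpa using h0)

end Reflection

section Split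

variable {n : ℕ} {D : Set ℝ} {f : (Fin n → ℝ) → ℝ}

theorem ComonModularOn.mono {E : Set ℝ} (hf : ComonModularOn D f) (hED : E ⊆ D) :
    ComonModularOn E f :=
  fun x y hx hy hxy => hf x y (fun i => hED (hx i)) (fun i => hED (hy i)) hxy

theorem comonModularOn_of_split (h0 : 0 ∈ D) (hpos : ComonModularOn (D ∩ Ici 0) f)
    (hneg : ComonModularOn (D ∩ Iic 0) f)
    (hsplit : ∀ x : Fin n → ℝ, (∀ i, x i ∈ D) →
      f x + f (fun _ => 0) = f (fun i => max (x i) 0) + f (fun i => min (x i) 0)) :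
    ComonModularOn D f := by
  intro x y hx hy hxy
  have hp := hpos _ _ (fun i => ⟨max_rec' (· ∈ D) (hx i) h0, mem_Ici.mpr (le_max_right _ _)⟩)
    (fun i => ⟨max_rec' (· ∈ D) (hy i) h0, mem_Ici.mpr (le_max_right _ _)⟩)
    (hxy.map_monotone fun _ _ hab => max_le_max_right 0 hab)
  have hn := hneg _ _ (fun i => ⟨min_rec' (· ∈ D) (hx i) h0, mem_Iic.mpr (min_le_right _ _)⟩)
    (fun i => ⟨min_rec' (· ∈ D) (hy i) h0, mem_Iic.mpr (min_le_right _ _)⟩)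
    (hxy.map_monotone fun _ _ hab => min_le_min_right 0 hab)
  have hmin := hsplit _ fun i => min_rec' (· ∈ D) (hx i) (hy i)
  have hmax := hsplit _ fun i => max_rec' (· ∈ D) (hx i) (hy i)
  rw [funext fun i => max_min_distrib_right (x i) (y i) 0,
    funext fun i => inf_inf_distrib_right (x i) (y i) 0] at hmin
  rw [funext fun i => sup_sup_distrib_right (x i) (y i) 0,
    funext fun i => min_max_distrib_right (x i) (y i) 0] at hmax
  linarith [hsplit x hx, hsplit y hy]

theorem comonModularOn_iff_split (h0 : 0 ∈ D) :
    ComonModularOn D f ↔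
      ComonModularOn (D ∩ Ici 0) f ∧ ComonModularOn (D ∩ Iic 0) f ∧
        ∀ x : Fin n → ℝ, (∀ i, x i ∈ D) →
          f x + f (fun _ => 0) = f (fun i => max (x i) 0) + f (fun i => -max (-x i) 0) := by
  have hnegPart : ∀ x : Fin n → ℝ, (fun i => -max (-x i) 0) = fun i => min (x i) 0 :=
    fun x => funext fun i => by simp [neg_sup]
  simp only [hnegPart]
  refine ⟨fun hf => ⟨hf.mono inter_subset_left, hf.mono inter_subset_left, fun x hx => ?_⟩,
    fun ⟨hpos, hneg, hsplit⟩ => comonModularOn_of_split h0 hpos hneg hsplit⟩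
  have h := hf x _ hx (fun _ => h0) (comonotone_const x 0)
  linarith

end Split

theorem statement9_general (n : ℕ) (I : Set ℝ) (h0I : (0 : ℝ) ∈ I)
    (f : (Fin n → ℝ) → ℝ) :
    (ComonModularOn I f ↔
      (ComonModularOn (I ∩ Set.Ici 0) f ∧ ComonModularOn (I ∩ Set.Iic 0) f ∧
        ∀ x : Fin n → ℝ, (∀ i, x i ∈ I) →
          f x + f (fun _ => 0) = f (fun i => max (x i) 0) + f (fun i => -max (-x i) 0)))
    ∧
    (ComonModularOn I f ↔
      (InvHMinDiffOn (I ∩ Set.Ici 0) f ∧ InvHMaxDiffOn (I ∩ Set.Iic 0) f ∧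
        ∀ x : Fin n → ℝ, (∀ i, x i ∈ I) →
          f x + f (fun _ => 0) = f (fun i => max (x i) 0) + f (fun i => -max (-x i) 0))) := by
  have hsplit := comonModularOn_iff_split (f := f) h0I
  refine ⟨hsplit, ?_⟩
  rw [hsplit, comonModularOn_iff_invHMinDiffOn inter_subset_right ⟨h0I, self_mem_Ici⟩,
    comonModularOn_iff_invHMaxDiffOn inter_subset_right ⟨h0I, self_mem_Iic⟩]

theorem statement9 (n : ℕ) (hn : 0 < n) (I : Set ℝ) (hI : I.OrdConnected)
    (hInt : ∃ a b : ℝ, a ∈ I ∧ b ∈ I ∧ a < b) (h0I : (0 : ℝ) ∈ I)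
    (f : (Fin n → ℝ) → ℝ) :
    (ComonModularOn I f ↔
      (ComonModularOn (I ∩ Set.Ici 0) f ∧ ComonModularOn (I ∩ Set.Iic 0) f ∧
        ∀ x : Fin n → ℝ, (∀ i, x i ∈ I) →
          f x + f (fun _ => 0) = f (fun i => max (x i) 0) + f (fun i => -max (-x i) 0)))
    ∧
    (ComonModularOn I f ↔
      (InvHMinDiffOn (I ∩ Set.Ici 0) f ∧ InvHMaxDiffOn (I ∩ Set.Iic 0) f ∧
        ∀ x : Fin n → ℝ, (∀ i, x i ∈ I) →
          f x + f (fun _ => 0) = f (fun i => max (x i) 0) + f (fun i => -max (-x i) 0))) :=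
  statement9_general n I h0I f
end
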